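/- Let G be a simple connected graph with N₀ vertices, E₀ edges, and circuit rank r = E₀ − N₀ + 1. For n ≥ 2, the multiplicity of the eigenvalue 1 of the normalized Laplacian Lₙ of sⁿ(G) equals r + 1, independent of n. -/

import Mathlib

/-- The subdivision graph `s(G)`: one new vertex inserted on each edge of `G`. -/
def subdivision {V : Type} (G : SimpleGraph V) : SimpleGraph (V ⊕ G.edgeSet) where
  Adj x y :=
    match x, y with
    | Sum.inl v, Sum.inr e => v ∈ (e : Sym2 V)
    | Sum.inr e, Sum.inl v => v ∈ (e : Sym2 V)
    | _, _ => False
  symm := ⟨by rintro (v | e) (w | f) h <;> exact h⟩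
  loopless := ⟨by rintro (v | e) h <;> exact h⟩

/-- The iterated subdivision `sⁿ(G)`, as a pair (vertex type, graph). -/
def iterSubdiv {V : Type} (G : SimpleGraph V) : ℕ → (W : Type) × SimpleGraph W
  | 0 => ⟨V, G⟩
  | n + 1 => ⟨_, subdivision (iterSubdiv G n).2⟩

instance iterSubdivFinite {V : Type} [Finite V] (G : SimpleGraph V) :
    ∀ n, Finite (iterSubdiv G n).1
  | 0 => ‹Finite V›
  | n + 1 => by
    haveI := iterSubdivFinite G n
    exact inferInstanceAs (Finite ((iterSubdiv G n).1 ⊕ (iterSubdiv G n).2.edgeSet))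

open Classical in
noncomputable def normAdj {V : Type} (G : SimpleGraph V) : Matrix V V ℝ :=
  Matrix.of fun i j =>
    if G.Adj i j then
      1 / Real.sqrt ((Nat.card (G.neighborSet i) : ℝ) * (Nat.card (G.neighborSet j) : ℝ))
    else 0

open Classical in
noncomputable def normLap {V : Type} (G : SimpleGraph V) : Matrix V V ℝ :=
  1 - normAdj G

theorem normAdj_isHermitian {V : Type} (G : SimpleGraph V) : (normAdj G).IsHermitian := by
  unfold Matrix.IsHermitian
  ext i j
  simp only [Matrix.conjTranspose_apply, normAdj, Matrix.of_apply, star_trivial]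
  rw [G.adj_comm]
  rcases em (G.Adj i j) with h | h <;> simp [h, mul_comm]

open Classical in
theorem normLap_isHermitian {V : Type} (G : SimpleGraph V) : (normLap G).IsHermitian :=
  Matrix.isHermitian_one.sub (normAdj_isHermitian G)

/-- `μ` is an eigenvalue of the matrix `M`. -/
def IsEigenvalueM {V : Type} [Finite V] (M : Matrix V V ℝ) (μ : ℝ) : Prop :=
  haveI := Fintype.ofFinite V
  haveI := Classical.decEq V
  Module.End.HasEigenvalue (Matrix.toLin' M) μ

/-- The multiplicity of `μ` as an eigenvalue of `M` (dimension of the eigenspace). -/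
noncomputable def eigMult {V : Type} [Finite V] (M : Matrix V V ℝ) (μ : ℝ) : ℕ :=
  haveI := Fintype.ofFinite V
  haveI := Classical.decEq V
  Module.finrank ℝ ↥(Module.End.eigenspace (Matrix.toLin' M) μ)

open Classical in
noncomputable def kemeny {V : Type} [Finite V] (G : SimpleGraph V) : ℝ :=
  haveI := Fintype.ofFinite V
  haveI := Classical.decEq V
  ∑ i : V, (if (normLap_isHermitian G).eigenvalues i = 0 then 0
            else ((normLap_isHermitian G).eigenvalues i)⁻¹)

/-- The multiplicative degree-Kirchhoff index `Kf* = 2|E| · Σ_{k≥2} 1/λ_k`. -/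
noncomputable def kirchhoffStar {V : Type} [Finite V] (G : SimpleGraph V) : ℝ :=
  2 * (Nat.card G.edgeSet : ℝ) * kemeny G

/-- The number of spanning trees of `G`. -/
noncomputable def numSpanningTrees {V : Type} (G : SimpleGraph V) : ℕ :=
  Nat.card {H : G.Subgraph // H.IsSpanning ∧ H.coe.IsTree}

/-!
For `n ≥ 2` we have `sⁿ(G) = s(H)` with `H = sⁿ⁻¹(G)` connected and bipartite. The normalized
adjacency matrix of a subdivision has the block form `[[0, B], [Bᵀ, 0]]`, where `B` is the
degree-weighted vertex–edge incidence matrix of `H`, so by rank–nullity its nullity is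
`|E(H)| - |V(H)| + 2 · dim ker Bᵀ`. A vector in `ker Bᵀ` alternates in sign (after weighting)
along every edge, so on a connected graph it is determined by one value, and a 2-colouring
produces a nonzero one: `dim ker Bᵀ = 1`. Finally, subdividing preserves `|E| - |V|`.
-/

open Module Matrix

section Subdivision

variable {U : Type} (G : SimpleGraph U)

@[simp] lemma subdivision_adj_inl_inl {v w : U} : ¬(subdivision G).Adj (.inl v) (.inl w) := id

@[simp] lemma subdivision_adj_inr_inr {e f : G.edgeSet} :
    ¬(subdivision G).Adj (.inr e) (.inr f) := id

@[simp] lemma subdivision_adj_inl_inr {v : U} {e : G.edgeSet} :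
    (subdivision G).Adj (.inl v) (.inr e) ↔ v ∈ (e : Sym2 U) := .rfl

@[simp] lemma subdivision_adj_inr_inl {v : U} {e : G.edgeSet} :
    (subdivision G).Adj (.inr e) (.inl v) ↔ v ∈ (e : Sym2 U) := .rfl

def subdivisionColoring : (subdivision G).Coloring Bool :=
  SimpleGraph.Coloring.mk (Sum.elim (fun _ => false) (fun _ => true)) <| by
    rintro (v | e) (w | f) h <;> first | exact h.elim | simp

lemma card_neighborSet_subdivision_inl (v : U) :
    Nat.card ((subdivision G).neighborSet (Sum.inl v)) = Nat.card (G.neighborSet v) := by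
  classical
  have : (subdivision G).neighborSet (Sum.inl v)
      = Sum.inr '' {e : G.edgeSet | v ∈ (e : Sym2 U)} := by
    ext (w | e) <;> simp [SimpleGraph.mem_neighborSet]
  rw [this, Nat.card_image_of_injective Sum.inr_injective,
    ← Nat.card_congr (G.incidenceSetEquivNeighborSet v)]
  exact Nat.card_congr
    ⟨fun e => ⟨e.1.1, e.1.2, e.2⟩, fun e => ⟨⟨e.1, e.2.1⟩, e.2.2⟩, fun _ => rfl, fun _ => rfl⟩

lemma card_neighborSet_subdivision_inr (e : G.edgeSet) :
    Nat.card ((subdivision G).neighborSet (Sum.inr e)) = 2 := by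
  obtain ⟨e, he⟩ := e
  induction e using Sym2.ind with
  | _ u w =>
    have : (subdivision G).neighborSet (Sum.inr ⟨s(u, w), he⟩) = {Sum.inl u, Sum.inl w} := by
      ext (v | f) <;> simp [SimpleGraph.mem_neighborSet]
    rw [this, Nat.card_coe_set_eq, Set.ncard_pair (by simpa using G.ne_of_adj he)]

lemma card_edgeSet_subdivision [Finite U] :
    Nat.card (subdivision G).edgeSet = 2 * Nat.card G.edgeSet := by
  classical
  have := Fintype.ofFinite U
  have handshake := (subdivision G).sum_degrees_eq_twice_card_edges
  simp only [Fintype.sum_sum_type, ← SimpleGraph.card_neighborSet_eq_degree,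
    ← Nat.card_eq_fintype_card, card_neighborSet_subdivision_inl,
    card_neighborSet_subdivision_inr, SimpleGraph.edgeFinset_card] at handshake
  simp only [Nat.card_eq_fintype_card, SimpleGraph.card_neighborSet_eq_degree,
    G.sum_degrees_eq_twice_card_edges, SimpleGraph.edgeFinset_card, Finset.sum_const,
    Finset.card_univ, smul_eq_mul] at handshake ⊢
  omega

variable {G}

lemma reachable_subdivision_inl {u v : U} (p : G.Walk u v) :
    (subdivision G).Reachable (Sum.inl u) (Sum.inl v) := by
  induction p with
  | nil => rfl
  | @cons a b _ h _ ih =>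
    have hab : (subdivision G).Adj (Sum.inl a) (Sum.inr ⟨s(a, b), h⟩) := Sym2.mem_mk_left _ _
    have hba : (subdivision G).Adj (Sum.inr ⟨s(a, b), h⟩) (Sum.inl b) := Sym2.mem_mk_right _ _
    exact hab.reachable.trans (hba.reachable.trans ih)

lemma connected_subdivision (hG : G.Connected) : (subdivision G).Connected := by
  have : Nonempty U := hG.nonempty
  have reach_inl : ∀ x, ∃ v, (subdivision G).Reachable x (Sum.inl v) := by
    rintro (v | ⟨e, he⟩)
    · exact ⟨v, .rfl⟩
    · induction e using Sym2.ind with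
      | _ u w => exact ⟨u, SimpleGraph.Adj.reachable (Sym2.mem_mk_left u w)⟩
  refine ⟨fun x y => ?_⟩
  obtain ⟨u, hu⟩ := reach_inl x
  obtain ⟨v, hv⟩ := reach_inl y
  exact hu.trans ((reachable_subdivision_inl (hG.preconnected u v).some).trans hv.symm)

end Subdivision

section IterSubdiv

variable {V : Type}

lemma connected_iterSubdiv {G : SimpleGraph V} (hG : G.Connected) :
    ∀ n, (iterSubdiv G n).2.Connected
  | 0 => hG
  | n + 1 => connected_subdivision (connected_iterSubdiv hG n)

lemma card_edgeSet_sub_card_iterSubdiv [Finite V] (G : SimpleGraph V) (n : ℕ) :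
    (Nat.card (iterSubdiv G n).2.edgeSet : ℤ) - Nat.card (iterSubdiv G n).1
      = Nat.card G.edgeSet - Nat.card V := by
  induction n with
  | zero => rfl
  | succ n ih =>
    change (Nat.card (subdivision (iterSubdiv G n).2).edgeSet : ℤ)
      - Nat.card ((iterSubdiv G n).1 ⊕ (iterSubdiv G n).2.edgeSet) = _
    rw [card_edgeSet_subdivision, Nat.card_sum, ← ih]
    push_cast
    ring

end IterSubdiv

section BlockKernel

variable {K : Type} [Field K] {m n : Type} [Fintype m] [Fintype n]

lemma finrank_ker_fromBlocks_zero_zero (B : Matrix m n K) (C : Matrix n m K) :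
    finrank K (LinearMap.ker (fromBlocks 0 B C 0).mulVecLin)
      = finrank K (LinearMap.ker C.mulVecLin) + finrank K (LinearMap.ker B.mulVecLin) := by
  have mem_ker (x : m ⊕ n → K) : fromBlocks 0 B C 0 *ᵥ x = 0 ↔
      C *ᵥ (x ∘ Sum.inl) = 0 ∧ B *ᵥ (x ∘ Sum.inr) = 0 := by
    simp only [fromBlocks_mulVec, zero_mulVec, zero_add, add_zero, funext_iff, Sum.forall,
      Sum.elim_inl, Sum.elim_inr, Pi.zero_apply, and_comm]
  let e : LinearMap.ker (fromBlocks 0 B C 0).mulVecLin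
      ≃ₗ[K] LinearMap.ker C.mulVecLin × LinearMap.ker B.mulVecLin :=
    { toFun x :=
        (⟨x.1 ∘ Sum.inl, ((mem_ker x.1).1 x.2).1⟩, ⟨x.1 ∘ Sum.inr, ((mem_ker x.1).1 x.2).2⟩)
      invFun y := ⟨Sum.elim y.1.1 y.2.1, (mem_ker _).2 ⟨y.1.2, y.2.2⟩⟩
      map_add' _ _ := rfl
      map_smul' _ _ := rfl
      left_inv x := Subtype.ext (Sum.elim_comp_inl_inr x.1)
      right_inv _ := rfl }
  rw [e.finrank_eq, finrank_prod]

lemma finrank_ker_fromBlocks_transpose (B : Matrix m n K) :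
    (finrank K (LinearMap.ker (fromBlocks 0 B Bᵀ 0).mulVecLin) : ℤ)
      = Fintype.card n - Fintype.card m + 2 * finrank K (LinearMap.ker Bᵀ.mulVecLin) := by
  have rank_nullity := LinearMap.finrank_range_add_finrank_ker B.mulVecLin
  have rank_nullity_transpose := LinearMap.finrank_range_add_finrank_ker Bᵀ.mulVecLin
  have := B.rank_transpose
  rw [finrank_ker_fromBlocks_zero_zero]
  simp only [Matrix.rank, finrank_fintype_fun_eq_card] at *
  omega

end BlockKernel

lemma eigenspace_one_sub_eq_ker {W : Type} [Fintype W] [DecidableEq W] (M : Matrix W W ℝ) :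
    End.eigenspace (toLin' (1 - M)) 1 = LinearMap.ker M.mulVecLin := by
  ext x
  simp

lemma eigMult_normLap_one {V : Type} [Fintype V] (G : SimpleGraph V) :
    eigMult (normLap G) 1 = finrank ℝ (LinearMap.ker (normAdj G).mulVecLin) := by
  classical
  unfold eigMult normLap
  rw [Subsingleton.elim (Fintype.ofFinite V) ‹_›, eigenspace_one_sub_eq_ker]

section AlternatingSpace

variable {K U : Type} [Field K] (H : SimpleGraph U) (a : U → K)

def alternatingSpace : Submodule K (U → K) where
  carrier := {f | ∀ ⦃u w⦄, H.Adj u w → a u * f u + a w * f w = 0}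
  add_mem' hf hg u w h := by
    simp only [Pi.add_apply]
    linear_combination hf h + hg h
  zero_mem' _ _ _ := by simp
  smul_mem' t f hf u w h := by
    simp only [Pi.smul_apply, smul_eq_mul]
    linear_combination t * hf h

variable {H a}

lemma mem_alternatingSpace {f : U → K} :
    f ∈ alternatingSpace H a ↔ ∀ ⦃u w⦄, H.Adj u w → a u * f u + a w * f w = 0 := Iff.rfl

lemma eq_zero_of_mem_alternatingSpace (ha : ∀ ⦃u w⦄, H.Adj u w → a u ≠ 0) {f : U → K}
    (hf : f ∈ alternatingSpace H a) {u v : U} (p : H.Walk u v) (hu : f u = 0) : f v = 0 := by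
  induction p with
  | nil => exact hu
  | @cons x y _ h _ ih =>
    apply ih
    have := hf h
    rw [hu, mul_zero, zero_add] at this
    exact (mul_eq_zero.1 this).resolve_left (ha h.symm)

lemma exists_ne_zero_mem_alternatingSpace (ha : ∀ ⦃u w⦄, H.Adj u w → a u ≠ 0)
    (c : H.Coloring Bool) (v : U) : ∃ f ∈ alternatingSpace H a, f v ≠ 0 := by
  classical
  -- `a` vanishes only at isolated vertices, where `f` is unconstrained.
  refine ⟨fun u => (if c u then 1 else -1) * (if a u = 0 then 1 else (a u)⁻¹), ?_, by
    dsimp only; split_ifs <;> simp_all⟩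
  intro u w h
  have hcuw := c.valid h
  simp only [ha h, ha h.symm, if_false]
  revert hcuw
  cases c u <;> cases c w <;> simp [ha h, ha h.symm]

lemma finrank_alternatingSpace [Finite U] (hH : H.Connected) (c : H.Coloring Bool)
    (ha : ∀ ⦃u w⦄, H.Adj u w → a u ≠ 0) : finrank K (alternatingSpace H a) = 1 := by
  obtain ⟨v⟩ := hH.nonempty
  let eval : alternatingSpace H a →ₗ[K] K :=
    (LinearMap.proj v).comp (alternatingSpace H a).subtype
  have eval_injective : Function.Injective eval := by
    refine (injective_iff_map_eq_zero eval).2 fun f hf => Subtype.ext (funext fun u => ?_)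
    exact eq_zero_of_mem_alternatingSpace ha f.2 (hH.preconnected v u).some hf
  obtain ⟨f, hf, hfv⟩ := exists_ne_zero_mem_alternatingSpace ha c v
  refine le_antisymm ?_ ?_
  · simpa using LinearMap.finrank_le_finrank_of_injective eval_injective
  · refine Submodule.one_le_finrank_iff.2 fun h => hfv ?_
    rw [h, Submodule.mem_bot] at hf
    simp [hf]

end AlternatingSpace

section SubdivisionIncidence

variable {U : Type} (H : SimpleGraph U)

open Classical in
noncomputable def subdivisionIncidence : Matrix U H.edgeSet ℝ :=
  of fun v e => if v ∈ (e : Sym2 U) then (√(2 * Nat.card (H.neighborSet v)))⁻¹ else 0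

lemma normAdj_subdivision : normAdj (subdivision H)
    = fromBlocks 0 (subdivisionIncidence H) (subdivisionIncidence H)ᵀ 0 := by
  classical
  ext (v | e) (w | f)
  · exact if_neg id
  · simp only [normAdj, subdivisionIncidence, of_apply, fromBlocks_apply₁₂,
      card_neighborSet_subdivision_inl, card_neighborSet_subdivision_inr, one_div,
      mul_comm _ (2 : ℝ), Nat.cast_ofNat, subdivision_adj_inl_inr]
  · simp only [normAdj, subdivisionIncidence, of_apply, fromBlocks_apply₂₁, transpose_apply,
      card_neighborSet_subdivision_inl, card_neighborSet_subdivision_inr, one_div,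
      Nat.cast_ofNat, subdivision_adj_inr_inl]
  · exact if_neg id

lemma subdivisionIncidence_transpose_mulVec [Fintype U] (f : U → ℝ) {u w : U}
    (h : H.Adj u w) :
    ((subdivisionIncidence H)ᵀ *ᵥ f) ⟨s(u, w), h⟩
      = (√(2 * Nat.card (H.neighborSet u)))⁻¹ * f u
        + (√(2 * Nat.card (H.neighborSet w)))⁻¹ * f w := by
  classical
  have hmem (v : U) : v ∈ s(u, w) ↔ v ∈ ({u, w} : Finset U) := by simp
  simp only [mulVec, dotProduct, transpose_apply, subdivisionIncidence, of_apply, ite_mul,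
    zero_mul, hmem, Finset.sum_ite_mem, Finset.univ_inter, Finset.sum_pair (H.ne_of_adj h)]

lemma ker_subdivisionIncidence_transpose [Fintype U] :
    LinearMap.ker (subdivisionIncidence H)ᵀ.mulVecLin
      = alternatingSpace H (fun v => (√(2 * Nat.card (H.neighborSet v)))⁻¹) := by
  ext f
  simp only [LinearMap.mem_ker, mulVecLin_apply, mem_alternatingSpace]
  constructor
  · intro hf u w h
    rw [← subdivisionIncidence_transpose_mulVec H f h, hf, Pi.zero_apply]
  · intro hf
    ext ⟨e, he⟩
    induction e using Sym2.ind with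
    | _ u w => exact (subdivisionIncidence_transpose_mulVec H f he).trans (hf he)

end SubdivisionIncidence

lemma eigMult_normLap_subdivision_one {U : Type} [Finite U] {H : SimpleGraph U}
    (hH : H.Connected) (c : H.Coloring Bool) :
    (eigMult (normLap (subdivision H)) 1 : ℤ) = Nat.card H.edgeSet - Nat.card U + 2 := by
  have := Fintype.ofFinite U
  have := Fintype.ofFinite H.edgeSet
  have weight_ne_zero : ∀ ⦃u w⦄, H.Adj u w → (√(2 * Nat.card (H.neighborSet u)))⁻¹ ≠ 0 := by
    intro u w h
    have : Nonempty (H.neighborSet u) := ⟨⟨w, h⟩⟩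
    have := Nat.card_pos (α := H.neighborSet u)
    positivity
  rw [eigMult_normLap_one, normAdj_subdivision, finrank_ker_fromBlocks_transpose,
    ker_subdivisionIncidence_transpose, finrank_alternatingSpace hH c weight_ne_zero,
    Nat.card_eq_fintype_card, Nat.card_eq_fintype_card]
  ring

/-- for `n ≥ 2`, the multiplicity of the eigenvalue `1` of the normalized
Laplacian `Lₙ` of `sⁿ(G)` equals `r + 1`, where `r = E₀ − N₀ + 1`. -/
theorem iterSubdiv_lap_eigMult_one {V : Type} [Finite V] (G : SimpleGraph V)
    (hG : G.Connected) (r : ℤ)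
    (hr : r = (Nat.card G.edgeSet : ℤ) - (Nat.card V : ℤ) + 1)
    (n : ℕ) (hn : 2 ≤ n) :
    (eigMult (normLap (iterSubdiv G n).2) 1 : ℤ) = r + 1 := by
  obtain ⟨m, rfl⟩ : ∃ m, n = m + 2 := ⟨n - 2, by omega⟩
  have hH : (iterSubdiv G (m + 1)).2.Connected := connected_iterSubdiv hG (m + 1)
  have hcard := card_edgeSet_sub_card_iterSubdiv G (m + 1)
  have hmult : (eigMult (normLap (iterSubdiv G (m + 2)).2) 1 : ℤ)
      = Nat.card (iterSubdiv G (m + 1)).2.edgeSet - Nat.card (iterSubdiv G (m + 1)).1 + 2 :=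
    eigMult_normLap_subdivision_one hH (subdivisionColoring _)
  omega
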